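/- Let P be a nonzero polynomial in two real variables which is homogeneous of degree m ≥ 1 and harmonic, i.e. ∂²P/∂x² + ∂²P/∂y² = 0 as polynomials. Then the zero set of P on the unit circle consists of exactly 2m points: the set { (x, y) ∈ ℝ² : x² + y² = 1 and P(x, y) = 0 } is finite of cardinality 2m. -/

import Mathlib

open MvPolynomial
open Complex


lemma coeff_pderiv' {σ R : Type*} [CommSemiring R] [DecidableEq σ] (i : σ)
    (P : MvPolynomial σ R) (d : σ →₀ ℕ) :
    coeff d (pderiv i P) = (d i + 1 : ℕ) * coeff (d + Finsupp.single i 1) P := by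
  induction P using MvPolynomial.induction_on' with
  | add p q hp hq => simp [map_add, coeff_add, hp, hq, mul_add]
  | monomial s a =>
    rw [pderiv_monomial, coeff_monomial, coeff_monomial]
    by_cases h : s = d + Finsupp.single i 1
    · subst h
      rw [if_pos (add_tsub_cancel_right _ _), if_pos rfl]
      simp [mul_comm]
    · rw [if_neg h, mul_zero]
      by_cases h2 : s - Finsupp.single i 1 = d
      · rw [if_pos h2]
        by_cases h3 : s i = 0
        · simp [h3]
        · exfalso
          apply h
          rw [← h2, tsub_add_cancel_of_le]
          rwa [Finsupp.single_le_iff, Nat.one_le_iff_ne_zero]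
      · rw [if_neg h2]

lemma fin2_eq (d : Fin 2 →₀ ℕ) : d = Finsupp.single 0 (d 0) + Finsupp.single 1 (d 1) := by
  ext j
  fin_cases j <;> simp [Finsupp.single_apply]

lemma fin2_degree (d : Fin 2 →₀ ℕ) : Finsupp.degree d = d 0 + d 1 := by
  rw [Finsupp.degree_eq_sum, Fin.sum_univ_two]

lemma harmonic_unique {m : ℕ} (P : MvPolynomial (Fin 2) ℂ)
    (hhom : P.IsHomogeneous m)
    (hharm : pderiv 0 (pderiv 0 P) + pderiv 1 (pderiv 1 P) = 0)
    (h0 : coeff (Finsupp.single 1 m) P = 0)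
    (h1 : coeff (Finsupp.single 0 1 + Finsupp.single 1 (m - 1)) P = 0) :
    P = 0 := by
  have key : ∀ k, coeff (Finsupp.single 0 k + Finsupp.single 1 (m - k)) P = 0 := by
    intro k
    induction k using Nat.strong_induction_on with
    | _ k ih =>
      match k with
      | 0 => simpa using h0
      | 1 => exact h1
      | (k+2) =>
        by_cases hk : k + 2 ≤ m
        · have hd := congrArg
            (coeff (Finsupp.single 0 k + Finsupp.single 1 (m - (k+2)))) hharm
          rw [coeff_add, coeff_zero, coeff_pderiv', coeff_pderiv', coeff_pderiv',
            coeff_pderiv'] at hd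
          have e1 : Finsupp.single 0 k + Finsupp.single 1 (m - (k+2)) + Finsupp.single 0 1
              + Finsupp.single (0 : Fin 2) 1
              = Finsupp.single 0 (k+2) + Finsupp.single 1 (m - (k+2)) := by
            ext j; fin_cases j <;> simp [Finsupp.single_apply]
          have e2 : Finsupp.single 0 k + Finsupp.single 1 (m - (k+2)) + Finsupp.single 1 1
              + Finsupp.single (1 : Fin 2) 1
              = Finsupp.single 0 k + Finsupp.single 1 (m - k) := by
            ext j
            fin_cases j <;> simp [Finsupp.single_apply]
            omega
          rw [e1, e2, ih k (by omega)] at hd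
          simp only [mul_zero, add_zero] at hd
          rcases mul_eq_zero.mp hd with h | h
          · exact absurd h ((Nat.cast_ne_zero (R := ℂ)).mpr (Nat.succ_ne_zero _))
          rcases mul_eq_zero.mp h with h' | h'
          · exact absurd h' ((Nat.cast_ne_zero (R := ℂ)).mpr (Nat.succ_ne_zero _))
          · exact h'
        · apply hhom.coeff_eq_zero
          rw [fin2_degree]
          simp [Finsupp.single_apply]
          omega
  ext d
  rw [coeff_zero]
  by_cases hdeg : Finsupp.degree d = m
  · rw [fin2_eq d]
    have : d 1 = m - d 0 := by rw [fin2_degree] at hdeg; omega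
    rw [this]
    exact key (d 0)
  · exact hhom.coeff_eq_zero hdeg

lemma harm_pow (s : ℂ) (hs : s^2 = -1) (m : ℕ) :
    pderiv 0 (pderiv 0 ((X 0 + C s * X 1 : MvPolynomial (Fin 2) ℂ)^m))
      + pderiv 1 (pderiv 1 ((X 0 + C s * X 1)^m)) = 0 := by
  have h0 : pderiv 0 (X 0 + C s * X 1 : MvPolynomial (Fin 2) ℂ) = 1 := by
    simp [pderiv_X_of_ne (show (1:Fin 2) ≠ 0 by decide)]
  have h1 : pderiv 1 (X 0 + C s * X 1 : MvPolynomial (Fin 2) ℂ) = C s := by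
    simp [pderiv_X_of_ne (show (0:Fin 2) ≠ 1 by decide)]
  have hm : ((m : MvPolynomial (Fin 2) ℂ)) = C (m : ℂ) := by simp
  have hCs : (C s : MvPolynomial (Fin 2) ℂ)^2 = -1 := by
    rw [← map_pow, hs]; simp
  rw [pderiv_pow, pderiv_pow, h0, h1, mul_one, hm,
    show (C (m:ℂ) : MvPolynomial (Fin 2) ℂ) * (X 0 + C s * X 1) ^ (m - 1) * C s
      = C ((m:ℂ) * s) * (X 0 + C s * X 1) ^ (m-1) by rw [map_mul]; ring,
    pderiv_C_mul, pderiv_C_mul, pderiv_pow, pderiv_pow, h0, h1, mul_one]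
  rw [map_mul]
  linear_combination (C ((m:ℂ)) * ((m-1 : ℕ) : MvPolynomial (Fin 2) ℂ)
    * (X 0 + C s * X 1)^(m-1-1)) * hCs

lemma coeff_pow_binom (s : ℂ) (m k : ℕ) (hk : k ≤ m) :
    coeff (Finsupp.single 0 k + Finsupp.single 1 (m - k))
      ((X 0 + C s * X 1 : MvPolynomial (Fin 2) ℂ)^m) = s^(m-k) * m.choose k := by
  rw [add_pow]
  have hterm : ∀ j, (X 0 : MvPolynomial (Fin 2) ℂ)^j * (C s * X 1)^(m-j)
        * (m.choose j : MvPolynomial (Fin 2) ℂ)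
      = monomial (Finsupp.single 0 j + Finsupp.single 1 (m-j)) (s^(m-j) * m.choose j) := by
    intro j
    rw [mul_pow, ← C_pow, X_pow_eq_monomial, X_pow_eq_monomial,
      show ((m.choose j : ℕ) : MvPolynomial (Fin 2) ℂ) = C ((m.choose j : ℕ) : ℂ) by simp,
      show (monomial (Finsupp.single (0:Fin 2) j)) (1:ℂ)
            * (C (s^(m-j)) * monomial (Finsupp.single 1 (m-j)) 1) * C ((m.choose j : ℕ) : ℂ)
          = C (s^(m-j) * ((m.choose j : ℕ) : ℂ))
            * (monomial (Finsupp.single (0:Fin 2) j) (1:ℂ)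
              * monomial (Finsupp.single 1 (m-j)) (1:ℂ)) from by
        rw [map_mul]; ring,
      monomial_mul, C_mul_monomial, mul_one, mul_one]
  rw [Finset.sum_congr rfl (fun j _ => hterm j), coeff_sum]
  rw [Finset.sum_eq_single k]
  · rw [coeff_monomial, if_pos rfl]
  · intro j hj hjk
    rw [coeff_monomial, if_neg]
    intro h
    exact hjk (by simpa using DFunLike.congr_fun h 0)
  · intro h
    exact absurd (Finset.mem_range.mpr (by omega)) h

lemma homog_pow (s : ℂ) (m : ℕ) :
    ((X 0 + C s * X 1 : MvPolynomial (Fin 2) ℂ)^m).IsHomogeneous m := by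
  have h : (X 0 + C s * X 1 : MvPolynomial (Fin 2) ℂ).IsHomogeneous 1 :=
    (isHomogeneous_X _ _).add (isHomogeneous_C_mul_X _ _)
  simpa using h.pow m

lemma classify (P : MvPolynomial (Fin 2) ℝ) (m : ℕ) (hm : 1 ≤ m)
    (hhom : P.IsHomogeneous m)
    (hharm : pderiv 0 (pderiv 0 P) + pderiv 1 (pderiv 1 P) = 0) :
    ∃ a : ℂ, (a = 0 → P = 0) ∧ ∀ x y : ℝ,
      ((eval ![x, y] P : ℝ) : ℂ)
        = a * ((x : ℂ) + y * I)^m + (starRingEnd ℂ) a * ((x : ℂ) - y * I)^m := by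
  set Q : MvPolynomial (Fin 2) ℂ := map (algebraMap ℝ ℂ) P with hQ
  set c₀ : ℂ := ((coeff (Finsupp.single 1 m) P : ℝ) : ℂ) with hc₀
  set c₁ : ℂ := ((coeff (Finsupp.single 0 1 + Finsupp.single 1 (m-1)) P : ℝ) : ℂ) with hc₁
  have hmC : (m : ℂ) ≠ 0 := Nat.cast_ne_zero.mpr (by omega)
  have hIm : (I : ℂ)^m = I^(m-1) * I := by
    rw [← pow_succ]; congr 1; omega
  have hIm' : (-I : ℂ)^m = (-I)^(m-1) * (-I) := by
    rw [← pow_succ]; congr 1; omega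
  have hu : (I : ℂ)^(m-1) ≠ 0 := pow_ne_zero _ I_ne_zero
  have hv : (-I : ℂ)^(m-1) ≠ 0 := pow_ne_zero _ (neg_ne_zero.mpr I_ne_zero)
  set a : ℂ := (c₀/2 + I*c₁/(2*m)) / (I^(m-1) * I) with ha
  set b : ℂ := (c₀/2 - I*c₁/(2*m)) / ((-I)^(m-1) * (-I)) with hb
  set A : MvPolynomial (Fin 2) ℂ :=
    C a * (X 0 + C I * X 1)^m + C b * (X 0 + C (-I) * X 1)^m with hA
  -- coefficient identities for A
  have hs1 : (Finsupp.single (1:Fin 2) m)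
      = Finsupp.single 0 0 + Finsupp.single 1 (m - 0) := by simp
  have hcA0 : coeff (Finsupp.single 1 m) A = a * I^m + b * (-I)^m := by
    rw [hA, coeff_add, coeff_C_mul, coeff_C_mul, hs1,
      coeff_pow_binom I m 0 (by omega), coeff_pow_binom (-I) m 0 (by omega)]
    simp
  have hcA1 : coeff (Finsupp.single 0 1 + Finsupp.single 1 (m-1)) A
      = a * (I^(m-1) * m) + b * ((-I)^(m-1) * m) := by
    rw [hA, coeff_add, coeff_C_mul, coeff_C_mul,
      coeff_pow_binom I m 1 (by omega), coeff_pow_binom (-I) m 1 (by omega)]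
    rw [Nat.choose_one_right]
  have heq0 : a * I^m + b * (-I)^m = c₀ := by
    rw [hIm, hIm', ha, hb, div_mul_cancel₀ _ (mul_ne_zero hu I_ne_zero),
      div_mul_cancel₀ _ (mul_ne_zero hv (neg_ne_zero.mpr I_ne_zero))]
    ring
  have heq1 : a * (I^(m-1) * m) + b * ((-I)^(m-1) * m) = c₁ := by
    rw [ha, hb]
    have hI : (I:ℂ) ≠ 0 := I_ne_zero
    have e1 : ∀ p : ℂ, (p/(I^(m-1)*I))*(I^(m-1)*(m:ℂ)) = p*m/I := by
      intro p
      rw [div_mul_eq_mul_div, show p*(I^(m-1)*(m:ℂ)) = I^(m-1)*(p*m) by ring,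
        mul_div_mul_left _ _ hu]
    have e2 : ∀ p : ℂ, (p/((-I)^(m-1)*(-I)))*((-I)^(m-1)*(m:ℂ)) = p*m/(-I) := by
      intro p
      rw [div_mul_eq_mul_div, show p*((-I)^(m-1)*(m:ℂ)) = (-I)^(m-1)*(p*m) by ring,
        mul_div_mul_left _ _ hv]
    rw [e1, e2, div_add_div _ _ hI (neg_ne_zero.mpr hI),
      div_eq_iff (mul_ne_zero hI (neg_ne_zero.mpr hI))]
    field_simp
    linear_combination (0:ℂ) * I_sq
  have hbconj : b = (starRingEnd ℂ) a := by
    rw [ha, hb, hc₀, hc₁]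
    simp only [map_div₀, map_add, map_sub, map_mul, map_pow, Complex.conj_I,
      Complex.conj_ofReal, map_natCast, map_ofNat]
    ring
  -- Q = A
  have hQA : Q = A := by
    have hsub : Q - A = 0 := by
      apply harmonic_unique (m := m)
      · exact (hhom.map _).sub (((homog_pow I m).C_mul a).add ((homog_pow (-I) m).C_mul b))
      · have hQharm : pderiv 0 (pderiv 0 Q) + pderiv 1 (pderiv 1 Q) = 0 := by
          rw [hQ, pderiv_map, pderiv_map, pderiv_map, pderiv_map, ← map_add, hharm, map_zero]
        have hAharm : pderiv 0 (pderiv 0 A) + pderiv 1 (pderiv 1 A) = 0 := by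
          rw [hA]
          simp only [map_add, pderiv_C_mul]
          have hi := harm_pow I I_sq m
          have hni := harm_pow (-I) (by rw [neg_pow, I_sq]; ring) m
          linear_combination (C a) * hi + (C b) * hni
        simp only [map_sub]
        linear_combination hQharm - hAharm
      · rw [coeff_sub, hcA0, heq0, hQ, coeff_map]
        simp [hc₀]
      · rw [coeff_sub, hcA1, heq1, hQ, coeff_map]
        simp [hc₁]
    have := sub_eq_zero.mp hsub
    exact this
  refine ⟨a, ?_, ?_⟩
  · intro ha0
    have hb0 : b = 0 := by rw [hbconj, ha0, map_zero]
    have hQ0 : Q = 0 := by rw [hQA, hA, ha0, hb0]; simp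
    exact map_injective (algebraMap ℝ ℂ) (fun x y h => by exact_mod_cast h)
      (by rw [map_zero]; rw [← hQ]; exact hQ0)
  · intro x y
    have hev : ((eval ![x, y] P : ℝ) : ℂ) = eval ![(x:ℂ), (y:ℂ)] Q := by
      have hfun : (⇑(algebraMap ℝ ℂ) ∘ ![x, y]) = ![(x:ℂ), (y:ℂ)] := by
        funext i
        fin_cases i <;> simp
      have h2 := eval₂_comp_left (algebraMap ℝ ℂ) (RingHom.id ℝ) ![x, y] P
      rw [RingHom.comp_id] at h2
      rw [← MvPolynomial.eval₂_id (g := ![x, y]) P,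
        show ((eval₂ (RingHom.id ℝ) ![x, y] P : ℝ) : ℂ)
          = algebraMap ℝ ℂ (eval₂ (RingHom.id ℝ) ![x, y] P) from rfl,
        h2, ← eval_map, hfun, hQ]
    rw [hev, hQA, hA, ← hbconj]
    simp only [eval_add, eval_mul, eval_pow, eval_C, eval_X,
      Matrix.cons_val_zero, Matrix.cons_val_one, Matrix.head_cons]
    ring


/-- The fact used in the proof of Lemma 2.6.1 of the paper: the zero set on the
unit circle of a nonzero homogeneous harmonic polynomial of degree `m ≥ 1` in
two real variables consists of exactly `2 m` points. -/
theorem harmonic_homogeneous_zero_set_on_circle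
    (P : MvPolynomial (Fin 2) ℝ) (hP : P ≠ 0)
    (m : ℕ) (hm : 1 ≤ m) (hhom : P.IsHomogeneous m)
    (hharm : pderiv 0 (pderiv 0 P) + pderiv 1 (pderiv 1 P) = 0) :
    Set.Finite {p : ℝ × ℝ | p.1 ^ 2 + p.2 ^ 2 = 1 ∧ eval ![p.1, p.2] P = 0} ∧
      Set.ncard {p : ℝ × ℝ | p.1 ^ 2 + p.2 ^ 2 = 1 ∧ eval ![p.1, p.2] P = 0} = 2 * m := by
  obtain ⟨a, ha0P, hrepr⟩ := classify P m hm hhom hharm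
  have ha : a ≠ 0 := fun h => hP (ha0P h)
  have h2m : (2*m) ≠ 0 := by omega
  set u : ℂ := -((starRingEnd ℂ) a) / a with hu
  have hu0 : u ≠ 0 := by
    rw [hu]
    exact div_ne_zero (neg_ne_zero.mpr (by simpa using ha)) ha
  have hconj : ∀ x y : ℝ, (starRingEnd ℂ) ((x:ℂ) + y*I) = (x:ℂ) - y*I := by
    intro x y
    simp [map_add, map_mul, Complex.conj_ofReal, Complex.conj_I]
    ring
  set S := {p : ℝ × ℝ | p.1 ^ 2 + p.2 ^ 2 = 1 ∧ eval ![p.1, p.2] P = 0} with hS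
  set f : ℝ × ℝ → ℂ := fun p => (p.1 : ℂ) + p.2 * I with hf
  have hinj : Function.Injective f := by
    intro p q h
    rw [hf] at h
    simp only [Complex.ext_iff, Complex.add_re, Complex.add_im, Complex.ofReal_re,
      Complex.ofReal_im, Complex.mul_re, Complex.mul_im, Complex.I_re, Complex.I_im] at h
    obtain ⟨h1, h2⟩ := h
    exact Prod.ext (by linarith) (by linarith)
  -- membership characterization
  have hmem : ∀ p : ℝ × ℝ, p ∈ S ↔ (f p)^(2*m) = u := by
    intro p
    have hcast : ∀ h : p.1 ^ 2 + p.2 ^ 2 = 1, ((p.1:ℂ))^2 + ((p.2:ℂ))^2 = 1 := by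
      intro h; exact_mod_cast congrArg (Complex.ofReal) h
    constructor
    · rintro ⟨hc, hz⟩
      have hc' := hcast hc
      have hzz : ((p.1:ℂ) + p.2*I) * ((p.1:ℂ) - p.2*I) = 1 := by
        linear_combination hc' + (-((p.2:ℂ)^2)) * I_sq
      have hzzm : ((p.1:ℂ) + p.2*I)^m * ((p.1:ℂ) - p.2*I)^m = 1 := by
        rw [← mul_pow, hzz, one_pow]
      have hz0 : ((eval ![p.1, p.2] P : ℝ) : ℂ) = 0 := by exact_mod_cast hz
      rw [hrepr p.1 p.2] at hz0
      have h1 : a * ((p.1:ℂ) + p.2*I)^(2*m) + (starRingEnd ℂ) a = 0 := by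
        linear_combination (((p.1:ℂ) + p.2*I)^m) * hz0 - ((starRingEnd ℂ) a) * hzzm
      simp only [hf]
      rw [hu, eq_div_iff ha]
      linear_combination h1
    · intro hzu
      simp only [hf] at hzu
      have habs : ‖((p.1:ℂ) + p.2*I)‖ = 1 := by
        have h1 : (‖((p.1:ℂ) + p.2*I)‖)^(2*m) = 1 := by
          rw [← norm_pow, hzu, hu, norm_div, norm_neg, Complex.norm_conj,
            div_self (by simpa using ha)]
        rcases lt_trichotomy (‖((p.1:ℂ) + p.2*I)‖) 1 with h | h | h
        · exact absurd h1 (by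
            have := pow_lt_one₀ (norm_nonneg _) h h2m
            intro hcc; rw [hcc] at this; exact lt_irrefl _ this)
        · exact h
        · exact absurd h1 (by
            have := one_lt_pow₀ h h2m
            intro hcc; rw [hcc] at this; exact lt_irrefl _ this)
      have hc : p.1 ^ 2 + p.2 ^ 2 = 1 := by
        have h2 : Complex.normSq ((p.1:ℂ) + p.2*I) = 1 := by
          rw [← Complex.sq_norm, habs, one_pow]
        rw [Complex.normSq_add_mul_I] at h2
        exact h2
      have hc' := hcast hc
      have hzz : ((p.1:ℂ) + p.2*I) * ((p.1:ℂ) - p.2*I) = 1 := by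
        linear_combination hc' + (-((p.2:ℂ)^2)) * I_sq
      have hzzm : ((p.1:ℂ) + p.2*I)^m * ((p.1:ℂ) - p.2*I)^m = 1 := by
        rw [← mul_pow, hzz, one_pow]
      have h1 : a * ((p.1:ℂ) + p.2*I)^(2*m) + (starRingEnd ℂ) a = 0 := by
        rw [hzu, hu]
        field_simp
        ring
      have hz0 : a * ((p.1:ℂ) + p.2*I)^m
          + (starRingEnd ℂ) a * ((p.1:ℂ) - p.2*I)^m = 0 := by
        linear_combination (((p.1:ℂ) - p.2*I)^m) * h1
          - (a * ((p.1:ℂ) + p.2*I)^m) * hzzm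
      refine ⟨hc, ?_⟩
      have : ((eval ![p.1, p.2] P : ℝ) : ℂ) = 0 := by
        rw [hrepr p.1 p.2]
        exact hz0
      exact_mod_cast this
  -- the image of S under f
  obtain ⟨c, hc⟩ := IsAlgClosed.exists_pow_nat_eq u (n := 2*m) (by omega)
  have hcne : c ≠ 0 := by
    intro h; apply hu0; rw [← hc, h, zero_pow h2m]
  have hT : f '' S = (fun w => c * w) '' ((Polynomial.nthRootsFinset (2*m) (1:ℂ) : Finset ℂ) : Set ℂ) := by
    ext z
    constructor
    · rintro ⟨p, hp, rfl⟩
      have hz := (hmem p).mp hp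
      refine ⟨c⁻¹ * f p, ?_, by field_simp⟩
      rw [Finset.mem_coe, Polynomial.mem_nthRootsFinset (by omega)]
      rw [mul_pow, hz, ← hc, inv_pow, inv_mul_eq_div, div_self (pow_ne_zero _ hcne)]
    · rintro ⟨w, hw, rfl⟩
      rw [Finset.mem_coe, Polynomial.mem_nthRootsFinset (by omega)] at hw
      have hzu : (c*w)^(2*m) = u := by rw [mul_pow, hw, mul_one, hc]
      refine ⟨(((c*w).re : ℝ), ((c*w).im : ℝ)), ?_, ?_⟩
      · apply (hmem _).mpr
        have : f ((c*w).re, (c*w).im) = c * w := by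
          rw [hf]; simpa using Complex.re_add_im (c*w)
        rw [this]; exact hzu
      · rw [hf]; simpa using Complex.re_add_im (c*w)
  have hcard : ((Polynomial.nthRootsFinset (2*m) (1:ℂ) : Finset ℂ)).card = 2*m :=
    (Complex.isPrimitiveRoot_exp (2*m) h2m).card_nthRootsFinset
  have hTfin : (f '' S).Finite := by
    rw [hT]; exact ((Polynomial.nthRootsFinset (2*m) (1:ℂ) : Finset ℂ).finite_toSet.image _)
  have hSfin : S.Finite := Set.Finite.of_finite_image hTfin (hinj.injOn)
  refine ⟨hSfin, ?_⟩
  have h1 : S.ncard = (f '' S).ncard := (Set.ncard_image_of_injective S hinj).symm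
  rw [h1, hT, Set.ncard_image_of_injective _ (mul_right_injective₀ hcne),
    Set.ncard_coe_finset, hcard]
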